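/- arXiv:2411.14171 — 5 statements merged into one kernel-verified Lean document; each statement's English description precedes it below -/
import Mathlib

section
/- Let H be a complex Hilbert space, {ψ_p} a Parseval frame with coordinate map C and Φ(T) = C T C*. For every bounded operator T ∈ B(H), the spectrum of Φ(T) equals σ(T) ∪ {0} when the projection P = C C* ≠ Id_{ℓ²}, and equals σ(T) when P = Id_{ℓ²}. -/
open scoped ComplexInnerProductSpace

set_option maxHeartbeats 1000000 in
open ContinuousLinearMap in
/-- For a Parseval frame `ψ` with isometric coordinate map `C` and
`Φ(T) = C T C*`: the spectrum of `Φ(T)` equals `σ(T) ∪ {0}` when the projection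
`P = C C*` is not the identity of `ℓ²`, and equals `σ(T)` when `P = Id`. -/
theorem parseval_frame_corner_spectrum
    {H : Type*} [NormedAddCommGroup H] [InnerProductSpace ℂ H] [CompleteSpace H]
    (ψ : ℕ → H)
    (hParseval : ∀ f : H, ‖f‖ ^ 2 = ∑' p : ℕ, ‖⟪ψ p, f⟫‖ ^ 2)
    (C : H →L[ℂ] lp (fun _ : ℕ => ℂ) 2)
    (hC : ∀ (f : H) (p : ℕ), C f p = ⟪ψ p, f⟫)
    (T : H →L[ℂ] H) :
    (C ∘L adjoint C ≠ 1 →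
      spectrum ℂ (C ∘L T ∘L adjoint C) = spectrum ℂ T ∪ {0}) ∧
    (C ∘L adjoint C = 1 →
      spectrum ℂ (C ∘L T ∘L adjoint C) = spectrum ℂ T) := by
  classical
  -- C is an isometry
  have hiso : ∀ f : H, ‖C f‖ = ‖f‖ := by
    intro f
    have h2 : (0:ℝ) < (2 : ENNReal).toReal := by norm_num
    have h1 : ‖C f‖ ^ (2 : ENNReal).toReal = ∑' p : ℕ, ‖C f p‖ ^ (2 : ENNReal).toReal :=
      lp.norm_rpow_eq_tsum h2 (C f)
    have h3 : ‖C f‖ ^ (2:ℝ) = ∑' p : ℕ, ‖⟪ψ p, f⟫‖ ^ (2:ℝ) := by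
      simpa [hC f] using h1
    have h4 : ‖C f‖ ^ (2:ℕ) = ∑' p : ℕ, ‖⟪ψ p, f⟫‖ ^ (2:ℕ) := by
      have := h3
      rw [show ((2:ℝ)) = ((2:ℕ):ℝ) by norm_num] at this
      simpa [Real.rpow_natCast] using this
    have h5 : ‖C f‖ ^ 2 = ‖f‖ ^ 2 := by rw [h4, ← hParseval f]
    exact (sq_eq_sq₀ (norm_nonneg _) (norm_nonneg _)).mp h5
  have hCC : adjoint C ∘L C = 1 := (norm_map_iff_adjoint_comp_self C).mp hiso
  have hCC' : ∀ x : H, adjoint C (C x) = x := fun x => by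
    have := congrArg (fun A => A x) hCC; simpa using this
  set Cs := adjoint C with hCs
  set Φ := C ∘L T ∘L Cs with hΦ
  have hA : ∀ (l : ℂ) (z : lp (fun _ : ℕ => ℂ) 2),
      (algebraMap ℂ (lp (fun _ : ℕ => ℂ) 2 →L[ℂ] lp (fun _ : ℕ => ℂ) 2) l - Φ) z
        = l • z - C (T (Cs z)) := by
    intro l z
    simp [Algebra.algebraMap_eq_smul_one, hΦ]
  have hB : ∀ (l : ℂ) (z : H),
      (algebraMap ℂ (H →L[ℂ] H) l - T) z = l • z - T z := by
    intro l z
    simp [Algebra.algebraMap_eq_smul_one]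
  -- forward: if λ - Φ is a unit, then λ - T is a unit (any λ)
  have fwd : ∀ l : ℂ, IsUnit (algebraMap ℂ (lp (fun _ : ℕ => ℂ) 2 →L[ℂ] lp (fun _ : ℕ => ℂ) 2) l
      - Φ) → IsUnit (algebraMap ℂ (H →L[ℂ] H) l - T) := by
    intro l hl
    obtain ⟨u, hu⟩ := hl
    set R := (↑u⁻¹ : lp (fun _ : ℕ => ℂ) 2 →L[ℂ] lp (fun _ : ℕ => ℂ) 2) with hR
    have huR : ∀ x, (algebraMap ℂ _ l - Φ) (R x) = x := fun x => by
      have : ((algebraMap ℂ _ l - Φ) * R) x = (1 : lp (fun _ : ℕ => ℂ) 2 →L[ℂ] _) x := by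
        rw [← hu, Units.mul_inv]
      simpa using this
    have hRu : ∀ x, R ((algebraMap ℂ _ l - Φ) x) = x := fun x => by
      have : (R * (algebraMap ℂ _ l - Φ)) x = (1 : lp (fun _ : ℕ => ℂ) 2 →L[ℂ] _) x := by
        rw [← hu, Units.inv_mul]
      simpa using this
    refine isUnit_iff_exists.mpr ⟨Cs ∘L R ∘L C, ?_, ?_⟩
    · -- (l - T) ∘ Cs R C = 1
      refine ContinuousLinearMap.ext fun x => ?_
      simp only [mul_apply_eq_comp, comp_apply, one_apply_eq_self]
      rw [hB]
      have h1 : l • R (C x) - C (T (Cs (R (C x)))) = C x := by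
        rw [← hA]; exact huR (C x)
      have h2 := congrArg Cs h1
      rw [map_sub, map_smul, hCC', hCC'] at h2
      exact h2
    · -- Cs R C ∘ (l - T) = 1
      refine ContinuousLinearMap.ext fun x => ?_
      simp only [mul_apply_eq_comp, comp_apply, one_apply_eq_self]
      have h3 : C ((algebraMap ℂ (H →L[ℂ] H) l - T) x)
          = (algebraMap ℂ _ l - Φ) (C x) := by
        rw [hB, hA, map_sub, map_smul, hCC']
      rw [h3, hRu, hCC']
  -- backward: if λ - T is a unit and (λ ≠ 0 or P = 1), then λ - Φ is a unit
  have bwd : ∀ l : ℂ, (l ≠ 0 ∨ C ∘L Cs = 1) →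
      IsUnit (algebraMap ℂ (H →L[ℂ] H) l - T) →
      IsUnit (algebraMap ℂ (lp (fun _ : ℕ => ℂ) 2 →L[ℂ] lp (fun _ : ℕ => ℂ) 2) l - Φ) := by
    intro l hl hT
    obtain ⟨u, hu⟩ := hT
    set S := (↑u⁻¹ : H →L[ℂ] H) with hS
    have huS : ∀ x, (algebraMap ℂ _ l - T) (S x) = x := fun x => by
      have : ((algebraMap ℂ _ l - T) * S) x = (1 : H →L[ℂ] H) x := by
        rw [← hu, Units.mul_inv]
      simpa using this
    have hSu : ∀ x, S ((algebraMap ℂ _ l - T) x) = x := fun x => by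
      have : (S * (algebraMap ℂ _ l - T)) x = (1 : H →L[ℂ] H) x := by
        rw [← hu, Units.inv_mul]
      simpa using this
    have hkill : ∀ x : lp (fun _ : ℕ => ℂ) 2, l • l⁻¹ • (x - C (Cs x)) = x - C (Cs x) := by
      intro x
      rcases hl with hne | hP
      · rw [smul_smul, mul_inv_cancel₀ hne, one_smul]
      · have : C (Cs x) = x := by
          have := congrArg (fun A => A x) hP; simpa using this
        rw [this]; simp
    set Q : lp (fun _ : ℕ => ℂ) 2 →L[ℂ] lp (fun _ : ℕ => ℂ) 2 :=
      C ∘L S ∘L Cs + l⁻¹ • (1 - C ∘L Cs) with hQ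
    have hQapp : ∀ z : lp (fun _ : ℕ => ℂ) 2,
        Q z = C (S (Cs z)) + l⁻¹ • (z - C (Cs z)) := by
      intro z
      simp only [hQ, add_apply, comp_apply, smul_apply, sub_apply, one_apply_eq_self]
    refine isUnit_iff_exists.mpr ⟨Q, ?_, ?_⟩
    · -- (l - Φ) ∘ Q = 1
      refine ContinuousLinearMap.ext fun x => ?_
      simp only [mul_apply_eq_comp, one_apply_eq_self]
      rw [hQapp, hA]
      have e1 : Cs (C (S (Cs x)) + l⁻¹ • (x - C (Cs x))) = S (Cs x) := by
        rw [map_add, map_smul, map_sub, hCC', hCC']; simp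
      rw [e1]
      have h2 : l • S (Cs x) - T (S (Cs x)) = Cs x := by
        rw [← hB]; exact huS (Cs x)
      calc l • (C (S (Cs x)) + l⁻¹ • (x - C (Cs x))) - C (T (S (Cs x)))
          = C (l • S (Cs x) - T (S (Cs x))) + l • l⁻¹ • (x - C (Cs x)) := by
            rw [smul_add, map_sub, map_smul]; abel
        _ = C (Cs x) + (x - C (Cs x)) := by rw [h2, hkill]
        _ = x := by abel
    · -- Q ∘ (l - Φ) = 1
      refine ContinuousLinearMap.ext fun x => ?_
      simp only [mul_apply_eq_comp, one_apply_eq_self]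
      rw [hA, hQapp]
      set y := l • x - C (T (Cs x)) with hy
      have e1 : Cs y = l • Cs x - T (Cs x) := by
        rw [hy, map_sub, map_smul, hCC']
      have h2 : S (Cs y) = Cs x := by
        have := hSu (Cs x)
        rw [hB] at this
        rw [e1]; exact this
      have h3 : y - C (Cs y) = l • (x - C (Cs x)) := by
        rw [e1, hy, map_sub, map_smul, smul_sub]; abel
      calc C (S (Cs y)) + l⁻¹ • (y - C (Cs y))
          = C (Cs x) + l⁻¹ • (l • (x - C (Cs x))) := by rw [h2, h3]
        _ = C (Cs x) + l • l⁻¹ • (x - C (Cs x)) := by rw [smul_comm]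
        _ = C (Cs x) + (x - C (Cs x)) := by rw [hkill]
        _ = x := by abel
  constructor
  · intro hPne
    ext l
    rcases eq_or_ne l 0 with rfl | hl0
    · simp only [Set.mem_union, Set.mem_singleton_iff, or_true, iff_true]
      rw [spectrum.mem_iff]
      intro hunit
      obtain ⟨u, hu⟩ := hunit
      apply hPne
      set R := (↑u⁻¹ : lp (fun _ : ℕ => ℂ) 2 →L[ℂ] lp (fun _ : ℕ => ℂ) 2) with hR
      have huR : ∀ x, (algebraMap ℂ _ (0:ℂ) - Φ) (R x) = x := fun x => by
        have : ((algebraMap ℂ _ (0:ℂ) - Φ) * R) x = (1 : lp (fun _ : ℕ => ℂ) 2 →L[ℂ] _) x := by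
          rw [← hu, Units.mul_inv]
        simpa using this
      refine ContinuousLinearMap.ext fun x => ?_
      simp only [comp_apply, one_apply]
      have h1 : -(C (T (Cs (R x)))) = x := by
        have := huR x
        rw [hA] at this
        simpa using this
      calc C (Cs x) = C (Cs (-(C (T (Cs (R x)))))) := by rw [h1]
        _ = -(C (Cs (C (T (Cs (R x)))))) := by rw [map_neg, map_neg]
        _ = -(C (T (Cs (R x)))) := by rw [hCC']
        _ = x := h1
    · simp only [Set.mem_union, Set.mem_singleton_iff, hl0, or_false]
      rw [spectrum.mem_iff, spectrum.mem_iff]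
      constructor
      · intro h hT; exact h (bwd l (Or.inl hl0) hT)
      · intro h hΦu; exact h (fwd l hΦu)
  · intro hP
    ext l
    rw [spectrum.mem_iff, spectrum.mem_iff]
    constructor
    · intro h hT; exact h (bwd l (Or.inr hP) hT)
    · intro h hΦu; exact h (fwd l hΦu)
end

section
/- (Feshbach–Schur spectral equivalence) Under Hypothesis: H self-adjoint on Hilbert space 𝓗, Π orthogonal projection with Π𝓗 ⊂ D(H), Π^⊥ H Π bounded, and for t ∈ J the operator Π^⊥ H Π^⊥ − tΠ^⊥ invertible in Π^⊥𝓗 with inverse R^⊥(t). Then for t ∈ J: t ∈ σ(H) if and only if t ∈ σ(Π H Π − Π H R^⊥(t) H Π) (the latter viewed as a self-adjoint operator in Π𝓗). -/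
open scoped ComplexInnerProductSpace

/-- Feshbach–Schur spectral equivalence: with `T` self-adjoint, `P` an
orthogonal projection with range in `D(T)`, `P^⊥ T P` bounded, and for `t ∈ J` the
operator `P^⊥ (T − t) P^⊥` invertible in `P^⊥ 𝓗` with bounded inverse `R`, one has
`t ∈ σ(T)` if and only if `t` is in the spectrum of the Feshbach–Schur operator
`P T P − P T R T P`, viewed as a self-adjoint operator in `P 𝓗` (i.e. the latter minus
`t` is not invertible in the corner `P B(𝓗) P`). -/
theorem feshbach_schur_spectral_equivalence
    {𝓗 : Type*} [NormedAddCommGroup 𝓗] [InnerProductSpace ℂ 𝓗] [CompleteSpace 𝓗]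
    (T : 𝓗 →ₗ.[ℂ] 𝓗) (hdense : Dense (T.domain : Set 𝓗))
    (hsym : ∀ x y : T.domain, ⟪T x, (y : 𝓗)⟫ = ⟪(x : 𝓗), T y⟫)
    (hsa : T.adjoint = T)
    (hsemibd : ∃ c : ℝ, ∀ x : T.domain, c * ‖(x : 𝓗)‖ ^ 2 ≤ (⟪(x : 𝓗), T x⟫).re)
    (P : 𝓗 →L[ℂ] 𝓗) (hPidem : IsIdempotentElem P) (hPsa : IsSelfAdjoint P)
    (hdom : ∀ f : 𝓗, P f ∈ T.domain)
    (hbounded : ∃ c : ℝ, ∀ f : 𝓗,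
      ‖T ⟨P f, hdom f⟩ - P (T ⟨P f, hdom f⟩)‖ ≤ c * ‖f‖)
    (J : Set ℝ) (t : ℝ) (ht : t ∈ J)
    (R : 𝓗 →L[ℂ] 𝓗)
    (hRdom : ∀ f : 𝓗, R f ∈ T.domain)
    (hRblock : ∀ f : 𝓗, P (R f) = 0 ∧ R (P f) = 0)
    (hRinv₁ : ∀ f : 𝓗,
      T ⟨R f, hRdom f⟩ - P (T ⟨R f, hRdom f⟩) - t • R f = f - P f)
    (hRinv₂ : ∀ x : T.domain, P (x : 𝓗) = 0 →
      R (T x - P (T x) - t • (x : 𝓗)) = (x : 𝓗))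
    (E : 𝓗 →L[ℂ] 𝓗)
    (hE : ∀ f : 𝓗,
      E f = P (T ⟨P f, hdom f⟩)
        - P (T ⟨R (T ⟨P f, hdom f⟩), hRdom (T ⟨P f, hdom f⟩)⟩)) :
    (¬ ∃ G : 𝓗 →L[ℂ] 𝓗,
        (∀ f : 𝓗, G f ∈ T.domain) ∧
        (∀ (f : 𝓗) (hf : G f ∈ T.domain), T ⟨G f, hf⟩ - t • G f = f) ∧
        (∀ x : T.domain, G (T x - t • (x : 𝓗)) = (x : 𝓗))) ↔
    (¬ ∃ S : 𝓗 →L[ℂ] 𝓗,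
        (∀ f : 𝓗, S f = P (S (P f))) ∧
        (∀ f : 𝓗, S (E f - t • P f) = P f) ∧
        (∀ f : 𝓗, E (S f) - t • S f = P f)) := by
  apply not_congr
  clear hdense hsa hsemibd ht
  -- basic projection facts
  have hPP : ∀ x : 𝓗, P (P x) = P x := fun x => by
    rw [← ContinuousLinearMap.mul_apply, hPidem.eq]
  have hPadj : ∀ x y : 𝓗, ⟪P x, y⟫ = ⟪x, P y⟫ := by
    have h : ContinuousLinearMap.adjoint P = P := by
      rw [← ContinuousLinearMap.star_eq_adjoint]; exact hPsa
    intro x y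
    conv_lhs => rw [← h]
    exact ContinuousLinearMap.adjoint_inner_left P y x
  have hTc : ∀ (a b : T.domain), (a : 𝓗) = (b : 𝓗) → T a = T b := fun a b h =>
    congrArg (fun z : T.domain => T z) (Subtype.ext h)
  -- the bounded operator C = P^⊥ T P
  obtain ⟨c, hc⟩ := hbounded
  set Craw : 𝓗 →ₗ[ℂ] 𝓗 :=
    { toFun := fun f => T ⟨P f, hdom f⟩ - P (T ⟨P f, hdom f⟩)
      map_add' := fun f g => by
        have h1 : T ⟨P (f + g), hdom (f + g)⟩ = T ⟨P f, hdom f⟩ + T ⟨P g, hdom g⟩ := by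
          rw [hTc ⟨P (f + g), hdom (f + g)⟩ (⟨P f, hdom f⟩ + ⟨P g, hdom g⟩) (by simp),
            T.map_add]
        rw [h1, map_add]; abel
      map_smul' := fun a f => by
        have h1 : T ⟨P (a • f), hdom (a • f)⟩ = a • T ⟨P f, hdom f⟩ := by
          rw [hTc ⟨P (a • f), hdom (a • f)⟩ (a • ⟨P f, hdom f⟩) (by simp),
            T.map_smul]
        rw [h1, map_smul]
        simp [smul_sub]
    } with hCraw
  set C : 𝓗 →L[ℂ] 𝓗 := Craw.mkContinuous c hc with hCmk
  have hCdef : ∀ f, C f = T ⟨P f, hdom f⟩ - P (T ⟨P f, hdom f⟩) := fun f => rfl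
  set Cd : 𝓗 →L[ℂ] 𝓗 := ContinuousLinearMap.adjoint C with hCdmk
  have hCd : ∀ x y, ⟪Cd x, y⟫ = ⟪x, C y⟫ := fun x y =>
    ContinuousLinearMap.adjoint_inner_left C y x
  have hPC : ∀ f, P (C f) = 0 := fun f => by
    rw [hCdef, map_sub, hPP, sub_self]
  have hCP : ∀ f, C (P f) = C f := fun f => by
    rw [hCdef, hCdef,
      hTc ⟨P (P f), hdom (P f)⟩ ⟨P f, hdom f⟩ (hPP f)]
  have hPTR : ∀ f, P (T ⟨R f, hRdom f⟩) = Cd (R f) := fun f => by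
    apply ext_inner_right ℂ
    intro g
    rw [hCd]
    have hTg : T ⟨P g, hdom g⟩ = C g + P (T ⟨P g, hdom g⟩) := by rw [hCdef]; abel
    calc ⟪P (T ⟨R f, hRdom f⟩), g⟫ = ⟪T ⟨R f, hRdom f⟩, P g⟫ := hPadj _ _
      _ = ⟪(R f : 𝓗), T ⟨P g, hdom g⟩⟫ := hsym ⟨R f, hRdom f⟩ ⟨P g, hdom g⟩
      _ = ⟪R f, C g⟫ + ⟪R f, P (T ⟨P g, hdom g⟩)⟫ := by
          conv_lhs => rw [hTg, inner_add_right]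
      _ = ⟪R f, C g⟫ := by rw [← hPadj, (hRblock f).1, inner_zero_left, add_zero]
  have hPCd : ∀ x, P (Cd x) = Cd x := fun x => by
    apply ext_inner_right ℂ
    intro g
    rw [hPadj, hCd, hCd, hCP]
  have hTR : ∀ f, T ⟨R f, hRdom f⟩ = Cd (R f) + (f - P f) + t • R f := fun f => by
    have h := hRinv₁ f
    rw [hPTR, sub_sub, sub_eq_iff_eq_add] at h
    rw [h]; abel
  have hRTP : ∀ f, R (T ⟨P f, hdom f⟩) = R (C f) := fun f => by
    have h : T ⟨P f, hdom f⟩ = C f + P (T ⟨P f, hdom f⟩) := by rw [hCdef]; abel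
    rw [h, map_add, (hRblock _).2, add_zero]
  have hPTP : ∀ f, P (T ⟨P f, hdom f⟩) = E f + Cd (R (C f)) := fun f => by
    have h := hE f
    rw [hTc ⟨R (T ⟨P f, hdom f⟩), hRdom _⟩ ⟨R (C f), hRdom (C f)⟩ (hRTP f), hPTR] at h
    rw [h]; abel
  have hE' : ∀ f, E f = P (T ⟨P f, hdom f⟩) - Cd (R (C f)) := fun f => by
    rw [hPTP]; abel
  have hTP : ∀ f, T ⟨P f, hdom f⟩ = E f + Cd (R (C f)) + C f := fun f => by
    have h1 : T ⟨P f, hdom f⟩ = C f + P (T ⟨P f, hdom f⟩) := by rw [hCdef]; abel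
    rw [h1, hPTP]; abel
  have hEP : ∀ f, E (P f) = E f := fun f => by
    rw [hE' (P f), hE' f, hTc ⟨P (P f), hdom (P f)⟩ ⟨P f, hdom f⟩ (hPP f), hCP]
  have hPE : ∀ f, P (E f) = E f := fun f => by
    rw [hE' f, map_sub, hPP, hPCd]
  have hwmem : ∀ f : 𝓗, P f - R (C f) ∈ T.domain := fun f =>
    Submodule.sub_mem _ (hdom f) (hRdom (C f))
  have key : ∀ f : 𝓗,
      T ⟨P f - R (C f), hwmem f⟩ - t • (P f - R (C f)) = E f - t • P f := by
    intro f
    have hsplit : T ⟨P f - R (C f), hwmem f⟩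
        = T ⟨P f, hdom f⟩ - T ⟨R (C f), hRdom (C f)⟩ := by
      rw [hTc ⟨P f - R (C f), hwmem f⟩ (⟨P f, hdom f⟩ - ⟨R (C f), hRdom (C f)⟩) rfl,
        T.map_sub]
    rw [hsplit, hTP, hTR (C f), hPC, smul_sub]
    abel
  constructor
  · -- resolvent exists → Schur inverse exists
    rintro ⟨G, hG1, hG2, hG3⟩
    refine ⟨P ∘L G ∘L P, ?_, ?_, ?_⟩
    · intro f
      show P (G (P f)) = P ((P ∘L G ∘L P) (P f))
      simp only [ContinuousLinearMap.comp_apply]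
      rw [hPP f, hPP (G (P f))]
    · intro f
      show P (G (P (E f - t • P f))) = P f
      have h1 : P (E f - t • P f) = E f - t • P f := by
        rw [map_sub, hPE, ContinuousLinearMap.map_smul_of_tower, hPP]
      have h3 : G (E f - t • P f) = P f - R (C f) := by
        rw [← key f]
        exact hG3 ⟨P f - R (C f), hwmem f⟩
      rw [h1, h3, map_sub, (hRblock (C f)).1, sub_zero, hPP]
    · intro f
      show E ((P ∘L G ∘L P) f) - t • (P ∘L G ∘L P) f = P f
      simp only [ContinuousLinearMap.comp_apply]
      set g := G (P f) with hg
      have hgdom : g ∈ T.domain := hG1 (P f)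
      have hgeq : T ⟨g, hgdom⟩ - t • g = P f := hG2 (P f) hgdom
      have hvdom : g - P g ∈ T.domain := Submodule.sub_mem _ hgdom (hdom g)
      have hPv : P (g - P g) = 0 := by rw [map_sub, hPP, sub_self]
      have hTg : T ⟨g, hgdom⟩ = P f + t • g := by rw [← hgeq]; abel
      have harg : T ⟨g - P g, hvdom⟩ - P (T ⟨g - P g, hvdom⟩) - t • (g - P g)
          = -(C g) := by
        have hsplit : T ⟨g - P g, hvdom⟩ = T ⟨g, hgdom⟩ - T ⟨P g, hdom g⟩ := by
          rw [hTc ⟨g - P g, hvdom⟩ (⟨g, hgdom⟩ - ⟨P g, hdom g⟩) rfl, T.map_sub]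
        rw [hsplit, hTg, hTP g]
        simp only [map_add, map_sub, ContinuousLinearMap.map_smul_of_tower, hPP,
          hPE, hPCd, hPC, smul_sub]
        abel
      have hveq : R (-(C g)) = g - P g := by
        rw [← harg]
        exact hRinv₂ ⟨g - P g, hvdom⟩ hPv
      have hRCg : R (C g) = P g - g := by
        rw [map_neg, neg_eq_iff_eq_neg] at hveq
        rw [hveq, neg_sub]
      have hco : P g - R (C g) = g := by rw [hRCg]; abel
      have hkg := key g
      rw [hTc ⟨P g - R (C g), hwmem g⟩ ⟨g, hgdom⟩ hco, hco, hgeq] at hkg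
      rw [hEP g]
      exact hkg.symm
  · -- Schur inverse exists → resolvent exists
    rintro ⟨S, hS1, hS2, hS3⟩
    have hPS : ∀ f, P (S f) = S f := fun f => by
      conv_lhs => rw [hS1 f]
      rw [hPP, ← hS1 f]
    set Gop : 𝓗 →L[ℂ] 𝓗 :=
      (ContinuousLinearMap.id ℂ 𝓗 - R ∘L C) ∘L S ∘L
        (ContinuousLinearMap.id ℂ 𝓗 - Cd ∘L R) + R with hGop
    have hGdef : ∀ f, Gop f
        = S (f - Cd (R f)) - R (C (S (f - Cd (R f)))) + R f := fun f => rfl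
    have hGmem : ∀ f, Gop f ∈ T.domain := by
      intro f
      have h1 : Gop f = P (S (P (f - Cd (R f)))) - R (C (S (f - Cd (R f)))) + R f := by
        rw [hGdef f, ← hS1]
      rw [h1]
      exact Submodule.add_mem _ (Submodule.sub_mem _ (hdom _) (hRdom _)) (hRdom _)
    have hGinv : ∀ f, T ⟨Gop f, hGmem f⟩ - t • Gop f = f := by
      intro f
      set u := S (f - Cd (R f)) with hu
      have hPu : P u = u := hPS _
      have humem : u ∈ T.domain := hPu ▸ hdom u
      have hsplit : T ⟨Gop f, hGmem f⟩
          = T ⟨u, humem⟩ - T ⟨R (C u), hRdom (C u)⟩ + T ⟨R f, hRdom f⟩ := by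
        rw [hTc ⟨Gop f, hGmem f⟩
          (⟨u, humem⟩ - ⟨R (C u), hRdom (C u)⟩ + ⟨R f, hRdom f⟩) (hGdef f),
          T.map_add, T.map_sub]
      have hTu : T ⟨u, humem⟩ = E u + Cd (R (C u)) + C u := by
        rw [hTc ⟨u, humem⟩ ⟨P u, hdom u⟩ hPu.symm, hTP u]
      have hEu : E u - t • u = P f - Cd (R f) := by
        have h := hS3 (f - Cd (R f))
        rw [show P (f - Cd (R f)) = P f - Cd (R f) by rw [map_sub, hPCd]] at h
        exact h
      have hEu' : E u = P f - Cd (R f) + t • u := by rw [← hEu]; abel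
      rw [hsplit, hTu, hTR (C u), hTR f, hGdef f, hPC, hEu', smul_add, smul_sub]
      abel
    refine ⟨Gop, hGmem, fun f hf => hGinv f, ?_⟩
    intro x
    set w := Gop (T x - t • (x : 𝓗)) with hw
    have hweq : T ⟨w, hGmem _⟩ - t • w = T x - t • (x : 𝓗) := hGinv _
    have hdmem : (x : 𝓗) - w ∈ T.domain := Submodule.sub_mem _ x.2 (hGmem _)
    have hTd : T ⟨(x : 𝓗) - w, hdmem⟩ - t • ((x : 𝓗) - w) = 0 := by
      have hs : T ⟨(x : 𝓗) - w, hdmem⟩ = T x - T ⟨w, hGmem _⟩ := by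
        rw [hTc ⟨(x : 𝓗) - w, hdmem⟩ (x - ⟨w, hGmem _⟩) rfl, T.map_sub]
      have h0 : T x - T ⟨w, hGmem _⟩ - (t • (x : 𝓗) - t • w)
          = (T x - t • (x : 𝓗)) - (T ⟨w, hGmem _⟩ - t • w) := by abel
      rw [hs, smul_sub, h0, hweq, sub_self]
    have hd0 : (x : 𝓗) - w = 0 := by
      have hinner : ∀ f : 𝓗, ⟪(x : 𝓗) - w, f⟫ = 0 := by
        intro f
        have hsm : ∀ (v y : 𝓗), ⟪v, t • y⟫ = ⟪t • v, y⟫ := by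
          intro v y
          rw [RCLike.real_smul_eq_coe_smul (K := ℂ) t y,
            RCLike.real_smul_eq_coe_smul (K := ℂ) t v,
            inner_smul_right, inner_smul_left]
          simp [Complex.conj_ofReal]
        calc ⟪(x : 𝓗) - w, f⟫
            = ⟪(x : 𝓗) - w, T ⟨Gop f, hGmem f⟩ - t • Gop f⟫ := by rw [hGinv f]
          _ = ⟪(x : 𝓗) - w, T ⟨Gop f, hGmem f⟩⟫ - ⟪(x : 𝓗) - w, t • Gop f⟫ :=
              inner_sub_right _ _ _
          _ = ⟪T ⟨(x : 𝓗) - w, hdmem⟩, Gop f⟫ - ⟪t • ((x : 𝓗) - w), Gop f⟫ := by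
              rw [hsym ⟨(x : 𝓗) - w, hdmem⟩ ⟨Gop f, hGmem f⟩, hsm]
          _ = ⟪T ⟨(x : 𝓗) - w, hdmem⟩ - t • ((x : 𝓗) - w), Gop f⟫ :=
              (inner_sub_left _ _ _).symm
          _ = 0 := by rw [hTd, inner_zero_left]
      exact inner_self_eq_zero.mp (hinner ((x : 𝓗) - w))
    have hxw : (x : 𝓗) = w := by rwa [sub_eq_zero] at hd0
    exact hxw.symm
end

section
/- (Feshbach–Schur block inversion) With H, Π, R^⊥(t) as in the Feshbach–Schur setting and t ∈ J \ σ(H), let R~(t) := (Π(H−t)Π − Π H R^⊥(t) H Π)^{-1} in Π𝓗. Then, with respect to the decomposition 𝓗 = Π𝓗 ⊕ Π^⊥𝓗, the resolvent satisfies (H − t)^{-1} = [[R~(t), −R~(t) H R^⊥(t)], [−R^⊥(t) H R~(t), R^⊥(t) + R^⊥(t) H R~(t) H R^⊥(t)]]. -/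
open scoped ComplexInnerProductSpace

/-- Feshbach–Schur block inversion: in the Feshbach–Schur setting, for
`t ∈ J` outside the spectrum, with `R = R^⊥(t)` the inverse of `P^⊥(T−t)P^⊥` in `P^⊥𝓗`
and `Rt = R~(t)` the inverse in `P𝓗` of `P(T−t)P − P T R T P`, the resolvent
`G = (T − t)⁻¹` is given blockwise by
`G = R~ − R~ T R^⊥ − R^⊥ T R~ + R^⊥ + R^⊥ T R~ T R^⊥` (each block extended by zero). -/
theorem feshbach_schur_block_inversion
    {𝓗 : Type*} [NormedAddCommGroup 𝓗] [InnerProductSpace ℂ 𝓗] [CompleteSpace 𝓗]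
    (T : 𝓗 →ₗ.[ℂ] 𝓗)
    (hsym : ∀ x y : T.domain, ⟪T x, (y : 𝓗)⟫ = ⟪(x : 𝓗), T y⟫)
    (P : 𝓗 →L[ℂ] 𝓗) (hPidem : IsIdempotentElem P) (hPsa : IsSelfAdjoint P)
    (hdom : ∀ f : 𝓗, P f ∈ T.domain)
    (hbounded : ∃ c : ℝ, ∀ f : 𝓗,
      ‖T ⟨P f, hdom f⟩ - P (T ⟨P f, hdom f⟩)‖ ≤ c * ‖f‖)
    (J : Set ℝ) (t : ℝ) (ht : t ∈ J)
    -- the inverse `R^⊥(t)` of `P^⊥ (T − t) P^⊥` in `P^⊥ 𝓗`, extended by zero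
    (R : 𝓗 →L[ℂ] 𝓗)
    (hRdom : ∀ f : 𝓗, R f ∈ T.domain)
    (hRblock : ∀ f : 𝓗, P (R f) = 0 ∧ R (P f) = 0)
    (hRinv₁ : ∀ f : 𝓗,
      T ⟨R f, hRdom f⟩ - P (T ⟨R f, hRdom f⟩) - t • R f = f - P f)
    (hRinv₂ : ∀ x : T.domain, P (x : 𝓗) = 0 →
      R (T x - P (T x) - t • (x : 𝓗)) = (x : 𝓗))
    -- the Feshbach–Schur effective operator `E = P T P − P T R T P`
    (E : 𝓗 →L[ℂ] 𝓗)
    (hE : ∀ f : 𝓗,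
      E f = P (T ⟨P f, hdom f⟩)
        - P (T ⟨R (T ⟨P f, hdom f⟩), hRdom (T ⟨P f, hdom f⟩)⟩))
    -- `Rt = R~(t)`, the inverse of `E − t P` in `P 𝓗`, extended by zero
    (Rt : 𝓗 →L[ℂ] 𝓗)
    (hRtblock : ∀ f : 𝓗, Rt f = P (Rt (P f)))
    (hRtdom : ∀ f : 𝓗, Rt f ∈ T.domain)
    (hRtinv₁ : ∀ f : 𝓗, Rt (E f - t • P f) = P f)
    (hRtinv₂ : ∀ f : 𝓗, E (Rt f) - t • Rt f = P f)
    -- the resolvent `G = (T − t)⁻¹`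
    (G : 𝓗 →L[ℂ] 𝓗)
    (hGdom : ∀ f : 𝓗, G f ∈ T.domain)
    (hGinv₁ : ∀ f : 𝓗, T ⟨G f, hGdom f⟩ - t • G f = f)
    (hGinv₂ : ∀ x : T.domain, G (T x - t • (x : 𝓗)) = (x : 𝓗)) :
    ∀ f : 𝓗,
      G f = Rt f
        - Rt (T ⟨R f, hRdom f⟩)
        - R (T ⟨Rt f, hRtdom f⟩)
        + R f
        + R (T ⟨Rt (T ⟨R f, hRdom f⟩), hRtdom (T ⟨R f, hRdom f⟩)⟩) := by

  intro f
  have hP : ∀ x : 𝓗, P (P x) = P x := fun x => by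
    conv_rhs => rw [← hPidem]
    rfl
  have hPRt : ∀ x : 𝓗, P (Rt x) = Rt x := fun x => by
    rw [hRtblock x, hP, ← hRtblock]
  set a : T.domain := ⟨Rt f, hRtdom f⟩ with ha
  set d : T.domain := ⟨R f, hRdom f⟩ with hd
  set b : T.domain := ⟨Rt (T d), hRtdom (T d)⟩ with hb
  set c : T.domain := ⟨R (T a), hRdom (T a)⟩ with hc
  set e : T.domain := ⟨R (T b), hRdom (T b)⟩ with he
  set s : T.domain := a - b - c + d + e with hs
  have hTs : T s = T a - T b - T c + T d + T e := by
    rw [hs, T.map_add, T.map_add, T.map_sub, T.map_sub]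
  have hcoe : ((s : 𝓗)) = (a : 𝓗) - b - c + d + e := rfl
  -- effective operator applied to `a`
  have ha' : (⟨P (Rt f), hdom (Rt f)⟩ : T.domain) = a := Subtype.ext (hPRt f)
  have hEa : E (Rt f) = P (T a) - P (T c) := by
    rw [hE (Rt f)]
    simp only [ha', hc]
  have hb' : (⟨P (Rt (T d)), hdom (Rt (T d))⟩ : T.domain) = b := Subtype.ext (hPRt _)
  have hEb : E (Rt (T d)) = P (T b) - P (T e) := by
    rw [hE (Rt (T d))]
    simp only [hb', he]
  -- the five block equations
  have e1 : T a - t • ((a : 𝓗)) = T a - P (T a) + P (T c) + P f := by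
    have h := hRtinv₂ f
    rw [hEa] at h
    have : (a : 𝓗) = Rt f := rfl
    rw [this]
    linear_combination (norm := abel) h
  have e2 : T b - t • ((b : 𝓗)) = T b - P (T b) + P (T e) + P (T d) := by
    have h := hRtinv₂ (T d)
    rw [hEb] at h
    have : (b : 𝓗) = Rt (T d) := rfl
    rw [this]
    linear_combination (norm := abel) h
  have e3 : T c - t • ((c : 𝓗)) = T a - P (T a) + P (T c) := by
    have h := hRinv₁ (T a)
    have : (c : 𝓗) = R (T a) := rfl
    rw [this]
    linear_combination (norm := abel) h
  have e4 : T d - t • ((d : 𝓗)) = f - P f + P (T d) := by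
    have h := hRinv₁ f
    have : (d : 𝓗) = R f := rfl
    rw [this]
    linear_combination (norm := abel) h
  have e5 : T e - t • ((e : 𝓗)) = T b - P (T b) + P (T e) := by
    have h := hRinv₁ (T b)
    have : (e : 𝓗) = R (T b) := rfl
    rw [this]
    linear_combination (norm := abel) h
  have key : T s - t • ((s : 𝓗)) = f := by
    calc T s - t • ((s : 𝓗))
        = (T a - t • ((a:𝓗))) - (T b - t • ((b:𝓗))) - (T c - t • ((c:𝓗)))
          + (T d - t • ((d:𝓗))) + (T e - t • ((e:𝓗))) := by
          rw [hTs, hcoe]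
          simp only [smul_add, smul_sub]
          abel
      _ = f := by rw [e1, e2, e3, e4, e5]; abel
  have hG := hGinv₂ s
  rw [key] at hG
  rw [hG, hcoe]
end

section
/- (Sz.-Nagy intertwiner) Let P and Q be orthogonal projections on a Hilbert space H with ‖P − Q‖ < 1. Then U := (1 − (P−Q)²)^{-1/2} (PQ + (1−P)(1−Q)) is a well-defined unitary operator satisfying P U = U Q. -/
set_option maxHeartbeats 1000000
set_option synthInstance.maxHeartbeats 400000

/-- Sz.-Nagy intertwiner: let `P`, `Q` be orthogonal projections on a
complex Hilbert space with `‖P − Q‖ < 1`.  Let `S = (1 − (P−Q)²)^{-1/2}` (characterized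
as the positive operator with `S² (1 − (P−Q)²) = 1`).  Then
`U = S (P Q + (1−P)(1−Q))` is a unitary operator satisfying `P U = U Q`. -/
theorem szNagy_intertwiner
    {H : Type*} [NormedAddCommGroup H] [InnerProductSpace ℂ H] [CompleteSpace H]
    (P Q : H →L[ℂ] H)
    (hPidem : IsIdempotentElem P) (hPsa : IsSelfAdjoint P)
    (hQidem : IsIdempotentElem Q) (hQsa : IsSelfAdjoint Q)
    (hPQ : ‖P - Q‖ < 1)
    (S : H →L[ℂ] H) (hSpos : S.IsPositive)
    (hSsq : S * S * (1 - (P - Q) ^ 2) = 1) :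
    S * (P * Q + (1 - P) * (1 - Q)) ∈ unitary (H →L[ℂ] H) ∧
    P * (S * (P * Q + (1 - P) * (1 - Q))) = (S * (P * Q + (1 - P) * (1 - Q))) * Q := by
  set T : H →L[ℂ] H := P * Q + (1 - P) * (1 - Q) with hT
  set A : H →L[ℂ] H := 1 - (P - Q) ^ 2 with hA
  have hPP : ∀ x : H →L[ℂ] H, P * (P * x) = P * x := fun x => by rw [← mul_assoc, hPidem.eq]
  have hQQ : ∀ x : H →L[ℂ] H, Q * (Q * x) = Q * x := fun x => by rw [← mul_assoc, hQidem.eq]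
  -- A is a unit
  have hAunit : IsUnit A := by
    have h2 : ‖(P - Q) ^ 2‖ < 1 := by
      calc ‖(P - Q) ^ 2‖ ≤ ‖P - Q‖ ^ 2 := by
            simpa [pow_two] using norm_mul_le (P - Q) (P - Q)
        _ < 1 := pow_lt_one₀ (norm_nonneg _) hPQ (by norm_num)
    exact (Units.oneSub ((P - Q) ^ 2) h2).isUnit
  -- two-sided inverse
  have hAS : A * (S * S) = 1 := by
    rcases hAunit with ⟨u, hu⟩
    have hinv : S * S = (↑u⁻¹ : H →L[ℂ] H) := by
      calc S * S = S * S * (↑u * (↑u⁻¹ : H →L[ℂ] H)) := by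
            rw [u.mul_inv, mul_one]
        _ = (S * S * A) * (↑u⁻¹ : H →L[ℂ] H) := by rw [hu]; simp only [mul_assoc]
        _ = (↑u⁻¹ : H →L[ℂ] H) := by rw [hSsq, one_mul]
    rw [hinv, ← hu, u.mul_inv]
  -- A in expanded form
  have hAexp : A = 1 - P - Q + P * Q + Q * P := by
    simp only [hA, pow_two, mul_sub, sub_mul, mul_one, one_mul, hPidem.eq, hQidem.eq]
    abel
  -- commutation of P, Q with A
  have hPA : P * A = A * P := by
    simp only [hAexp, mul_add, add_mul, mul_sub, sub_mul, mul_one, one_mul, mul_assoc,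
      hPidem.eq, hQidem.eq, hPP, hQQ]
    abel
  have hQA : Q * A = A * Q := by
    simp only [hAexp, mul_add, add_mul, mul_sub, sub_mul, mul_one, one_mul, mul_assoc,
      hPidem.eq, hQidem.eq, hPP, hQQ]
    abel
  -- commutation of x with S*S whenever x commutes with A
  have hSS : ∀ x : H →L[ℂ] H, x * A = A * x → x * (S * S) = (S * S) * x := by
    intro x hx
    calc x * (S * S) = (S * S * A) * (x * (S * S)) := by rw [hSsq, one_mul]
      _ = S * S * (A * x * (S * S)) := by simp only [mul_assoc]
      _ = S * S * (x * A * (S * S)) := by rw [← hx]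
      _ = S * S * (x * (A * (S * S))) := by simp only [mul_assoc]
      _ = S * S * x := by rw [hAS, mul_one]
  -- star of T
  have hTstar : star T = Q * P + (1 - Q) * (1 - P) := by
    simp [hT, star_mul, hPsa.star_eq, hQsa.star_eq, star_sub]
  -- T* T = A and T T* = A
  have hTsT : star T * T = A := by
    rw [hTstar, hAexp, hT]
    simp only [mul_add, add_mul, mul_sub, sub_mul, mul_one, one_mul, mul_assoc,
      hPidem.eq, hQidem.eq, hPP, hQQ]
    abel
  have hTTs : T * star T = A := by
    rw [hTstar, hAexp, hT]
    simp only [mul_add, add_mul, mul_sub, sub_mul, mul_one, one_mul, mul_assoc,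
      hPidem.eq, hQidem.eq, hPP, hQQ]
    abel
  -- T commutes with A
  have hTA : T * A = A * T := by
    simp only [hT, add_mul, mul_add]
    rw [show (1 - P) * (1 - Q) * A = (1 - P) * ((1 - Q) * A) from mul_assoc _ _ _,
      show (1 - Q) * A = A * (1 - Q) by simp only [sub_mul, mul_sub, one_mul, mul_one, hQA],
      ← mul_assoc,
      show (1 - P) * A = A * (1 - P) by simp only [sub_mul, mul_sub, one_mul, mul_one, hPA],
      mul_assoc P Q A, show Q * A = A * Q from hQA, ← mul_assoc, hPA, mul_assoc, mul_assoc]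
  -- S is self-adjoint
  have hSsa : IsSelfAdjoint S := hSpos.isSelfAdjoint
  have hSnn : (0 : H →L[ℂ] H) ≤ S := (ContinuousLinearMap.nonneg_iff_isPositive S).mpr hSpos
  -- P commutes with S, via uniqueness of the positive square root
  have hPS : P * S = S * P := by
    set W : H →L[ℂ] H := P + P - 1 with hW
    have hWsa : star W = W := by simp [hW, hPsa.star_eq]
    have hWW : W * W = 1 := by
      simp only [hW, sub_mul, mul_sub, add_mul, mul_add, mul_one, one_mul, hPidem.eq]
      abel
    have hWA : W * A = A * W := by
      simp only [hW, sub_mul, mul_sub, add_mul, mul_add, mul_one, one_mul, hPA]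
    have hWSS : W * (S * S) = (S * S) * W := hSS W hWA
    set S' : H →L[ℂ] H := W * S * W with hS'
    have hS'nn : (0 : H →L[ℂ] H) ≤ S' := by
      have := star_left_conjugate_nonneg hSnn W
      rwa [hWsa] at this
    have hS'sq : S' * S' = S * S := by
      calc S' * S' = W * S * (W * W) * S * W := by simp only [hS', mul_assoc]
        _ = W * (S * S) * W := by rw [hWW]; simp only [mul_assoc, one_mul]
        _ = S * S * (W * W) := by rw [hWSS]; simp only [mul_assoc]
        _ = S * S := by rw [hWW, mul_one]
    have hkey : S' = S := by
      have h1 : CFC.sqrt (S' ^ 2) = S' := CFC.sqrt_sq S' hS'nn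
      have h2 : CFC.sqrt (S ^ 2) = S := CFC.sqrt_sq S hSnn
      rw [← h1, ← h2, pow_two, pow_two, hS'sq]
    -- from W S W = S deduce W S = S W, then P S = S P
    have hWS : W * S = S * W := by
      have := congrArg (fun x => x * W) hkey
      simpa [hS', mul_assoc, hWW] using this
    have h2 : P * S + P * S = S * P + S * P := by
      have := hWS
      simp only [hW, sub_mul, mul_sub, add_mul, mul_add, one_mul, mul_one] at this
      have := congrArg (fun x => x + S) this
      simpa [sub_add_cancel] using this
    have : (2 : ℂ) • (P * S) = (2 : ℂ) • (S * P) := by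
      rw [two_smul, two_smul]; exact h2
    exact smul_right_injective _ (by norm_num : (2 : ℂ) ≠ 0) this
  -- S commutes with A
  have hSA : S * A = A * S := by
    calc S * A = (A * (S * S)) * (S * A) := by rw [hAS, one_mul]
      _ = A * (S * (S * S * A)) := by simp only [mul_assoc]
      _ = A * S := by rw [hSsq, mul_one]
  constructor
  · rw [Unitary.mem_iff]
    constructor
    · -- star (S T) * (S T) = 1
      have hSST : (S * S) * T = T * (S * S) := (hSS T hTA).symm
      calc star (S * T) * (S * T) = star T * (S * (S * T)) := by
            rw [star_mul, hSsa.star_eq]; simp only [mul_assoc]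
        _ = star T * (T * (S * S)) := by rw [show S * (S * T) = S * S * T by rw [mul_assoc],
              hSST]
        _ = (star T * T) * (S * S) := by simp only [mul_assoc]
        _ = 1 := by rw [hTsT, hAS]
      
    · -- (S T) * star (S T) = 1
      calc (S * T) * star (S * T) = S * (T * star T) * S := by
            rw [star_mul, hSsa.star_eq]; simp only [mul_assoc]
        _ = S * A * S := by rw [hTTs]
        _ = A * (S * S) := by rw [hSA]; simp only [mul_assoc]
        _ = 1 := hAS
  · -- intertwining
    have hPT : P * T = T * Q := by
      simp only [hT, mul_add, add_mul, mul_sub, sub_mul, mul_one, one_mul, mul_assoc,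
        hPidem.eq, hQidem.eq, hPP, hQQ]
      abel
    calc P * (S * T) = S * (P * T) := by rw [← mul_assoc, hPS, mul_assoc]
      _ = (S * T) * Q := by rw [hPT, mul_assoc]
end

section
/- Let H be self-adjoint on Hilbert space 𝓗, 𝔥 a bounded self-adjoint operator, and let P be an orthogonal projection with P𝓗 ⊂ D(H). If ‖(1−P) H P‖ ≤ δ (on D(H)) and v ∈ 𝓗 satisfies v = P v, then for all t ∈ ℝ, ‖e^{-itH} v − e^{-it PHP} v‖ ≤ 2|t| δ ‖v‖, where PHP denotes the bounded self-adjoint operator P H P. -/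
set_option maxHeartbeats 1000000
set_option synthInstance.maxHeartbeats 200000


open scoped ComplexInnerProductSpace

/-- let `T` be a self-adjoint operator generating the unitary group
`U(t) = e^{−itT}`, `P` an orthogonal projection with range in `D(T)`, `A = P T P`
bounded, and suppose `‖(1−P) T P‖ ≤ δ`.  Then for every `v` with `P v = v` and every
`t ∈ ℝ`, `‖e^{−itT} v − e^{−itPTP} v‖ ≤ 2 |t| δ ‖v‖`. -/
theorem effective_evolution_estimate
    {𝓗 : Type*} [NormedAddCommGroup 𝓗] [InnerProductSpace ℂ 𝓗] [CompleteSpace 𝓗]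
    (T : 𝓗 →ₗ.[ℂ] 𝓗)
    (hsym : ∀ x y : T.domain, ⟪T x, (y : 𝓗)⟫ = ⟪(x : 𝓗), T y⟫)
    (P : 𝓗 →L[ℂ] 𝓗) (hPidem : IsIdempotentElem P) (hPsa : IsSelfAdjoint P)
    (hdom : ∀ f : 𝓗, P f ∈ T.domain)
    (A : 𝓗 →L[ℂ] 𝓗) (hA : ∀ f : 𝓗, A f = P (T ⟨P f, hdom f⟩))
    (δ : ℝ) (hδ : 0 ≤ δ)
    (hbound : ∀ f : 𝓗, ‖T ⟨P f, hdom f⟩ - P (T ⟨P f, hdom f⟩)‖ ≤ δ * ‖f‖)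
    -- the unitary group `U(t) = e^{−itT}` generated by `T`
    (U : ℝ → 𝓗 →L[ℂ] 𝓗)
    (hU0 : U 0 = 1)
    (hUiso : ∀ (t : ℝ) (f : 𝓗), ‖U t f‖ = ‖f‖)
    (hUgroup : ∀ s t : ℝ, U (s + t) = (U s).comp (U t))
    (hUgen : ∀ (x : T.domain) (t : ℝ),
      HasDerivAt (fun s : ℝ => U s (x : 𝓗)) (U t ((-Complex.I) • T x)) t)
    (v : 𝓗) (hv : P v = v) (t : ℝ) :
    ‖U t v - NormedSpace.exp (((-Complex.I) * (t : ℂ)) • A) v‖ ≤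
      2 * |t| * δ * ‖v‖ := by
  classical
  set B : 𝓗 →L[ℂ] 𝓗 := (-Complex.I) • A with hBdef
  set E : ℝ → 𝓗 →L[ℂ] 𝓗 := fun s => NormedSpace.exp (s • B) with hEdef
  -- basic projection algebra
  have hPP : ∀ f : 𝓗, P (P f) = P f := by
    intro f
    conv_lhs => rw [show P (P f) = (P * P) f from rfl, hPidem]
  have hPA : ∀ f : 𝓗, P (A f) = A f := by
    intro f; rw [hA]; exact hPP _
  have hAP : ∀ f : 𝓗, A (P f) = A f := by
    intro f
    rw [hA, hA]
    have h : (⟨P (P f), hdom (P f)⟩ : T.domain) = ⟨P f, hdom f⟩ := Subtype.ext (hPP f)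
    rw [h]
  have hPBc : P * B = B := by
    ext f
    simp only [hBdef, ContinuousLinearMap.mul_apply, ContinuousLinearMap.smul_apply, map_smul]
    rw [hPA]
  have hBPc : B * P = B := by
    ext f
    simp only [hBdef, ContinuousLinearMap.mul_apply, ContinuousLinearMap.smul_apply]
    rw [hAP]
  have hcommPB : Commute P B := by
    unfold Commute SemiconjBy
    rw [hPBc, hBPc]
  -- P symmetric
  have hPsym : ∀ x y : 𝓗, ⟪P x, y⟫ = ⟪x, P y⟫ :=
    ContinuousLinearMap.isSelfAdjoint_iff_isSymmetric.mp hPsa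
  -- A is self-adjoint
  have hAsa : IsSelfAdjoint A := by
    rw [ContinuousLinearMap.isSelfAdjoint_iff_isSymmetric]
    intro x y
    show ⟪A x, y⟫ = ⟪x, A y⟫
    rw [hA x, hA y]
    calc ⟪P (T ⟨P x, hdom x⟩), y⟫
        = ⟪(T ⟨P x, hdom x⟩ : 𝓗), P y⟫ := hPsym _ _
      _ = ⟪(P x : 𝓗), (T ⟨P y, hdom y⟩ : 𝓗)⟫ := hsym ⟨P x, hdom x⟩ ⟨P y, hdom y⟩
      _ = ⟪x, P (T ⟨P y, hdom y⟩)⟫ := hPsym _ _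
  -- star of B
  have hstarB : star B = -B := by
    rw [hBdef, star_smul, hAsa.star_eq]
    simp [← neg_smul]
  -- E s is norm-preserving
  have hWunit : ∀ s : ℝ, star (E s) * E s = 1 := by
    intro s
    have hs : star (s • B) = -(s • B) := by
      rw [← algebraMap_smul ℂ s B, star_smul, hstarB, smul_neg]
      congr 2
      simp [Complex.coe_algebraMap, Complex.star_def, Complex.conj_ofReal]
    rw [hEdef]
    simp only
    let +nondep : NormedAlgebra ℚ (𝓗 →L[ℂ] 𝓗) := NormedAlgebra.restrictScalars ℚ ℂ _
    rw [NormedSpace.star_exp, hs,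
      ← NormedSpace.exp_add_of_commute ((Commute.refl (s • B)).neg_left),
      neg_add_cancel, NormedSpace.exp_zero]
  have hWnorm : ∀ (s : ℝ) (x : 𝓗), ‖E s x‖ = ‖x‖ := by
    intro s x
    have h1 : ContinuousLinearMap.adjoint (E s) (E s x) = x := by
      rw [← ContinuousLinearMap.star_eq_adjoint, ← ContinuousLinearMap.mul_apply,
        hWunit s, ContinuousLinearMap.one_apply]
    have h2 : ⟪E s x, E s x⟫ = ⟪x, x⟫ := by
      calc ⟪E s x, E s x⟫
          = ⟪x, ContinuousLinearMap.adjoint (E s) (E s x)⟫ :=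
            (ContinuousLinearMap.adjoint_inner_right _ _ _).symm
        _ = ⟪x, x⟫ := by rw [h1]
    rw [inner_self_eq_norm_sq_to_K, inner_self_eq_norm_sq_to_K] at h2
    have h4 : ‖E s x‖ ^ 2 = ‖x‖ ^ 2 := by exact_mod_cast h2
    nlinarith [norm_nonneg (E s x), norm_nonneg x]
  -- P commutes with E s
  have hcommPE : ∀ s : ℝ, P * E s = E s * P := fun s =>
    ((hcommPB.smul_right s).exp_right)
  have hPEz : ∀ (s : ℝ) (z : 𝓗), P (E s z) = E s (P z) := by
    intro s z
    have := congrArg (fun (M : 𝓗 →L[ℂ] 𝓗) => M z) (hcommPE s)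
    simpa using this
  have hPEv : ∀ s : ℝ, P (E s v) = E s v := by
    intro s; rw [hPEz, hv]
  have hmem : ∀ z : 𝓗, P z = z → z ∈ T.domain := fun z hz => hz ▸ hdom z
  -- derivative of s ↦ E s v
  have hxderiv : ∀ s : ℝ, HasDerivAt (fun σ : ℝ => E σ v) (B (E s v)) s := by
    intro s
    have h1 : HasDerivAt (fun u : ℝ => NormedSpace.exp (u • B))
        (B * NormedSpace.exp (s • B)) s := hasDerivAt_exp_smul_const' B s
    have h2 := ((ContinuousLinearMap.apply ℂ 𝓗 v).restrictScalars
      ℝ).hasFDerivAt.comp_hasDerivAt s h1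
    simpa [hEdef, Function.comp_def] using h2
  -- strong continuity of U on domain vectors
  have hUcont : ∀ x : T.domain, Continuous fun σ : ℝ => U σ (x : 𝓗) := fun x =>
    continuous_iff_continuousAt.mpr fun σ => (hUgen x σ).continuousAt
  -- the derivative of the comparison function
  set D : ℝ → 𝓗 := fun s => U (-s) (Complex.I •
    (T ⟨P (E s v), hdom (E s v)⟩ - P (T ⟨P (E s v), hdom (E s v)⟩))) with hDdef
  have key : ∀ s : ℝ, HasDerivAt (fun σ : ℝ => U (-σ) (E σ v)) (D s) s := by
    intro s
    have hwP : P (E s v) = E s v := hPEv s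
    have hwmem : E s v ∈ T.domain := hmem _ hwP
    have hBwP : P (B (E s v)) = B (E s v) := by
      have := congrArg (fun (M : 𝓗 →L[ℂ] 𝓗) => M (E s v)) hPBc
      simpa using this
    have hBwmem : B (E s v) ∈ T.domain := hmem _ hBwP
    -- derivative of σ ↦ U (-σ) (E s v)
    have hg2 : HasDerivAt (fun σ : ℝ => U (-σ) (E s v))
        ((-1 : ℝ) • U (-s) ((-Complex.I) • T ⟨E s v, hwmem⟩)) s := by
      have h := hUgen ⟨E s v, hwmem⟩ (-s)
      exact h.scomp s (hasDerivAt_neg s)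
    -- derivative of σ ↦ U (-σ) (E σ v - E s v)
    have hg1 : HasDerivAt (fun σ : ℝ => U (-σ) (E σ v - E s v))
        (U (-s) (B (E s v))) s := by
      rw [hasDerivAt_iff_isLittleO]
      have hc := hasDerivAt_iff_isLittleO.mp (hxderiv s)
      have ha : (fun σ : ℝ => U (-σ) (E σ v - E s v - (σ - s) • B (E s v)))
          =o[nhds s] fun σ => σ - s := by
        rw [← Asymptotics.isLittleO_norm_left]
        have heq : (fun σ : ℝ => ‖U (-σ) (E σ v - E s v - (σ - s) • B (E s v))‖)
            = fun σ => ‖E σ v - E s v - (σ - s) • B (E s v)‖ :=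
          funext fun σ => hUiso _ _
        rw [heq, Asymptotics.isLittleO_norm_left]
        exact hc
      have hcont0 : Filter.Tendsto
          (fun σ : ℝ => U (-σ) (B (E s v)) - U (-s) (B (E s v))) (nhds s) (nhds 0) := by
        have h1 : Continuous fun σ : ℝ => U (-σ) (B (E s v)) :=
          (hUcont ⟨B (E s v), hBwmem⟩).comp continuous_neg
        have h2 := (h1.tendsto s).sub_const (U (-s) (B (E s v)))
        simpa using h2
      have hb : (fun σ : ℝ => (σ - s) • (U (-σ) (B (E s v)) - U (-s) (B (E s v))))
          =o[nhds s] fun σ => σ - s := by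
        have h1 : (fun σ : ℝ => U (-σ) (B (E s v)) - U (-s) (B (E s v)))
            =o[nhds s] fun _ => (1 : ℝ) := (Asymptotics.isLittleO_one_iff ℝ).mpr hcont0
        have h2 := (Asymptotics.isBigO_refl (fun σ : ℝ => σ - s) (nhds s)).smul_isLittleO h1
        simpa using h2
      have hsum := ha.add hb
      refine hsum.congr_left fun σ => ?_
      simp only [map_sub, ContinuousLinearMap.map_smul_of_tower, smul_sub, sub_self,
        map_zero]
      abel
    have hgsum := hg1.add hg2
    have hfun : (fun σ : ℝ => U (-σ) (E σ v - E s v) + U (-σ) (E s v))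
        = fun σ : ℝ => U (-σ) (E σ v) := funext fun σ => by
      rw [map_sub]; abel
    rw [show ((fun σ : ℝ => U (-σ) (E σ v - E s v)) + fun σ : ℝ => U (-σ) (E s v))
        = fun σ : ℝ => U (-σ) (E σ v) from hfun] at hgsum
    have hsub : (⟨P (E s v), hdom (E s v)⟩ : T.domain) = ⟨E s v, hwmem⟩ :=
      Subtype.ext hwP
    have hAw : B (E s v) = (-Complex.I) • P (T ⟨E s v, hwmem⟩) := by
      have h1 : B (E s v) = (-Complex.I) • A (E s v) := by
        rw [hBdef]; rfl
      rw [h1, hA (E s v), hsub]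
    have hval : D s = U (-s) (B (E s v))
        + (-1 : ℝ) • U (-s) ((-Complex.I) • (T ⟨E s v, hwmem⟩ : 𝓗)) := by
      rw [hDdef]
      simp only [hsub]
      rw [hAw, neg_one_smul ℝ, ← sub_eq_add_neg, ← map_sub]
      congr 1
      module
    rw [hval]
    exact hgsum
  -- norm bound on the derivative
  have hnorm : ∀ s : ℝ, ‖D s‖ ≤ δ * ‖v‖ := by
    intro s
    rw [hDdef]
    simp only
    rw [hUiso, norm_smul, Complex.norm_I, one_mul]
    calc ‖T ⟨P (E s v), hdom (E s v)⟩ - P (T ⟨P (E s v), hdom (E s v)⟩)‖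
        ≤ δ * ‖E s v‖ := hbound (E s v)
      _ = δ * ‖v‖ := by rw [hWnorm]
  -- mean value inequality
  have hMVT : ‖U (-t) (E t v) - U (-(0:ℝ)) (E 0 v)‖ ≤ (δ * ‖v‖) * ‖t - 0‖ :=
    Convex.norm_image_sub_le_of_norm_hasDerivWithin_le
      (fun x _ => (key x).hasDerivWithinAt) (fun x _ => hnorm x)
      convex_univ (Set.mem_univ 0) (Set.mem_univ t)
  have hg0 : U (-(0:ℝ)) (E 0 v) = v := by
    have hE0 : E 0 = 1 := by
      rw [hEdef]; simp [NormedSpace.exp_zero]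
    rw [hE0]
    simp [hU0]
  have hUUt : ∀ z : 𝓗, U t (U (-t) z) = z := by
    intro z
    have h := hUgroup t (-t)
    rw [add_neg_cancel, hU0] at h
    have := congrArg (fun (M : 𝓗 →L[ℂ] 𝓗) => M z) h
    simpa using this.symm
  have hEt : NormedSpace.exp (((-Complex.I) * (t : ℂ)) • A) = E t := by
    rw [hEdef]
    simp only
    congr 1
    rw [hBdef, mul_comm, mul_smul, ← Complex.coe_algebraMap, algebraMap_smul]
  rw [hEt]
  have hfinal : U t v - E t v = U t (U (-(0:ℝ)) (E 0 v) - U (-t) (E t v)) := by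
    rw [map_sub, hg0, hUUt]
  rw [hfinal, hUiso]
  calc ‖U (-(0:ℝ)) (E 0 v) - U (-t) (E t v)‖
      = ‖U (-t) (E t v) - U (-(0:ℝ)) (E 0 v)‖ := norm_sub_rev _ _
    _ ≤ (δ * ‖v‖) * ‖t - 0‖ := hMVT
    _ ≤ 2 * |t| * δ * ‖v‖ := by
        rw [sub_zero, Real.norm_eq_abs]
        nlinarith [abs_nonneg t, norm_nonneg v, mul_nonneg hδ (norm_nonneg v),
          mul_nonneg (mul_nonneg hδ (norm_nonneg v)) (abs_nonneg t)]
end
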